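/- For every u ≤ 0, the function g(u) = E(u)²·(3·E(u)² - 4·u·E(u) + u² - 2) satisfies g(u) ≤ 1/18. -/

import Mathlib

/-!
Write `u = -t` with `t ≥ 0`; by symmetry `E(u) = φ(t) / Φ(t)`. Since `φ(s) = φ(t) exp((t² - s²)/2)`,
bounding `exp x ≥ 1 + x + x²/2` for `x ≥ 0` gives `Φ(t) ≥ 1/2 + φ(t) (t + t³/3 + t⁵/15)` (integrate
over `s ∈ [0, t]`) and `φ(t) (1 + t²/2 + t⁴/8) ≤ φ(0) < 0.399` (take `s = 0`). Together these bound
`E(u)` by an explicit rational function `M(t)`. The quartic `e ↦ e² (3e² + 4te + t² - 2)` is controlled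
on `[0, M]` by its value at `M`, and that value is at most `1/18` by a polynomial inequality in `t`.
-/

open MeasureTheory Real Filter

/-- The standard normal density. -/
noncomputable def gphi (u : ℝ) : ℝ := Real.exp (-u ^ 2 / 2) / Real.sqrt (2 * Real.pi)

/-- The standard normal CDF. -/
noncomputable def gPhi (u : ℝ) : ℝ := ∫ s in Set.Iic u, gphi s

/-- The standard normal tail. -/
noncomputable def gPhiBar (u : ℝ) : ℝ := 1 - gPhi u

/-- The inverse Mills ratio. -/
noncomputable def mills (u : ℝ) : ℝ := gphi u / gPhiBar u

/-- P(r) = E[tanh²(√r Z)]. -/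
noncomputable def Pfun (r : ℝ) : ℝ := ∫ z : ℝ, Real.tanh (Real.sqrt r * z) ^ 2 * gphi z

/-- B(q). -/
noncomputable def Bfun (κ q : ℝ) : ℝ :=
  (1 - q) * ∫ z : ℝ, mills ((κ - Real.sqrt q * z) / Real.sqrt (1 - q)) ^ 2 * gphi z

/-- C_κ. -/
noncomputable def Ckappa (κ : ℝ) : ℝ := ∫ z : ℝ, max (κ - z) 0 ^ 2 * gphi z

/-- The critical capacity. -/
noncomputable def alphac (κ : ℝ) : ℝ := 2 / (Real.pi * Ckappa κ)

/-- g(u) = E(u)²(3E(u)² - 4uE(u) + u² - 2). -/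
noncomputable def gfun (u : ℝ) : ℝ :=
  mills u ^ 2 * (3 * mills u ^ 2 - 4 * u * mills u + u ^ 2 - 2)

lemma gphi_pos (x : ℝ) : 0 < gphi x := by
  unfold gphi
  positivity

lemma gphi_neg (x : ℝ) : gphi (-x) = gphi x := by
  simp [gphi]

lemma continuous_gphi : Continuous gphi := by
  unfold gphi
  fun_prop

lemma gphi_eq_exp_div (x : ℝ) : gphi x = exp (-(1 / 2) * x ^ 2) / √(2 * π) := by
  unfold gphi
  ring_nf

lemma integrable_gphi : Integrable gphi := by
  simp only [funext gphi_eq_exp_div]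
  exact (integrable_exp_neg_mul_sq (by norm_num)).div_const _

lemma integral_gphi : ∫ x, gphi x = 1 := by
  simp only [gphi_eq_exp_div]
  rw [integral_div, integral_gaussian, show π / (1 / 2) = 2 * π by ring,
    div_self (by positivity)]

lemma gPhiBar_eq_integral_Ioi (u : ℝ) : gPhiBar u = ∫ x in Set.Ioi u, gphi x := by
  rw [gPhiBar, gPhi, ← integral_gphi,
    ← intervalIntegral.integral_Iic_add_Ioi integrable_gphi.integrableOn
      integrable_gphi.integrableOn]
  ring

lemma gPhiBar_eq_gPhi_neg (u : ℝ) : gPhiBar u = gPhi (-u) := by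
  rw [gPhiBar_eq_integral_Ioi, gPhi, ← integral_comp_neg_Ioi]
  simp only [gphi_neg]

lemma gPhi_zero : gPhi 0 = 1 / 2 := by
  have h := gPhiBar_eq_gPhi_neg 0
  rw [neg_zero, gPhiBar] at h
  linarith

lemma mills_nonneg (u : ℝ) : 0 ≤ mills u := by
  rw [mills, gPhiBar_eq_integral_Ioi]
  exact div_nonneg (gphi_pos u).le (setIntegral_nonneg measurableSet_Ioi fun x _ => (gphi_pos x).le)

lemma mills_neg (t : ℝ) : mills (-t) = gphi t / gPhi t := by
  rw [mills, gPhiBar_eq_gPhi_neg, neg_neg, gphi_neg]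

lemma gphi_mul_exp (t s : ℝ) : gphi t * exp ((t ^ 2 - s ^ 2) / 2) = gphi s := by
  rw [gphi, div_mul_eq_mul_div, ← exp_add, gphi]
  ring_nf

lemma integral_quadratic_exp_taylor (t : ℝ) :
    ∫ s in (0 : ℝ)..t, (1 + (t ^ 2 - s ^ 2) / 2 + ((t ^ 2 - s ^ 2) / 2) ^ 2 / 2)
      = t + t ^ 3 / 3 + t ^ 5 / 15 := by
  have h_expand : ∀ s : ℝ, 1 + (t ^ 2 - s ^ 2) / 2 + ((t ^ 2 - s ^ 2) / 2) ^ 2 / 2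
      = (1 + t ^ 2 / 2 + t ^ 4 / 8) - (1 / 2 + t ^ 2 / 4) * s ^ 2 + s ^ 4 / 8 := fun s => by ring
  simp only [h_expand]
  rw [intervalIntegral.integral_add, intervalIntegral.integral_sub] <;>
    try (apply Continuous.intervalIntegrable; fun_prop)
  simp only [intervalIntegral.integral_const, intervalIntegral.integral_const_mul,
    intervalIntegral.integral_div, integral_pow, smul_eq_mul]
  ring

lemma gPhi_ge {t : ℝ} (ht : 0 ≤ t) : 1 / 2 + gphi t * (t + t ^ 3 / 3 + t ^ 5 / 15) ≤ gPhi t := by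
  have h_taylor : ∀ s ∈ Set.Icc 0 t,
      gphi t * (1 + (t ^ 2 - s ^ 2) / 2 + ((t ^ 2 - s ^ 2) / 2) ^ 2 / 2) ≤ gphi s := by
    rintro s ⟨hs0, hst⟩
    rw [← gphi_mul_exp t s]
    exact mul_le_mul_of_nonneg_left (quadratic_le_exp_of_nonneg (by nlinarith)) (gphi_pos t).le
  have h_int : gphi t * (t + t ^ 3 / 3 + t ^ 5 / 15) ≤ ∫ s in (0 : ℝ)..t, gphi s := by
    rw [← integral_quadratic_exp_taylor, ← intervalIntegral.integral_const_mul]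
    exact intervalIntegral.integral_mono_on ht (by apply Continuous.intervalIntegrable; fun_prop)
      (continuous_gphi.intervalIntegrable 0 t) h_taylor
  have h_gPhi : gPhi t - gPhi 0 = ∫ s in (0 : ℝ)..t, gphi s :=
    intervalIntegral.integral_Iic_sub_Iic integrable_gphi.integrableOn integrable_gphi.integrableOn
  rw [gPhi_zero] at h_gPhi
  linarith

lemma gphi_zero_lt : gphi 0 < 399 / 1000 := by
  have h_sqrt : (1000 / 399 : ℝ) < √(2 * π) := by
    rw [lt_sqrt (by norm_num)]
    nlinarith [pi_gt_d6]
  rw [gphi, div_lt_iff₀ (by positivity)]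
  norm_num at h_sqrt ⊢
  linarith

lemma gphi_mul_le (t : ℝ) : gphi t * (1 + t ^ 2 / 2 + t ^ 4 / 8) ≤ 399 / 1000 := by
  calc gphi t * (1 + t ^ 2 / 2 + t ^ 4 / 8)
      = gphi t * (1 + t ^ 2 / 2 + (t ^ 2 / 2) ^ 2 / 2) := by ring
    _ ≤ gphi t * exp (t ^ 2 / 2) :=
      mul_le_mul_of_nonneg_left (quadratic_le_exp_of_nonneg (by positivity)) (gphi_pos t).le
    _ = gphi 0 := by rw [← gphi_mul_exp t 0]; ring_nf
    _ ≤ 399 / 1000 := gphi_zero_lt.le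

lemma div_le_div_of_le_half_add {p F S D c : ℝ} (hp : 0 < p) (hS : 0 ≤ S) (hD : 0 < D)
    (hF : 1 / 2 + p * S ≤ F) (hpD : p * D ≤ c) : p / F ≤ c / (D / 2 + c * S) := by
  have hc : 0 < c := lt_of_lt_of_le (mul_pos hp hD) hpD
  rw [div_le_div_iff₀ (by nlinarith [mul_nonneg hp.le hS]) (by positivity)]
  nlinarith [mul_le_mul_of_nonneg_left hF hc.le]

noncomputable def millsBound (t : ℝ) : ℝ :=
  399 / 1000 / ((1 + t ^ 2 / 2 + t ^ 4 / 8) / 2 + 399 / 1000 * (t + t ^ 3 / 3 + t ^ 5 / 15))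

lemma mills_neg_le_millsBound {t : ℝ} (ht : 0 ≤ t) : mills (-t) ≤ millsBound t := by
  rw [mills_neg, millsBound]
  exact div_le_div_of_le_half_add (gphi_pos t) (by positivity) (by positivity) (gPhi_ge ht)
    (gphi_mul_le t)

lemma sq_mul_quartic_le_of_le {e M t c : ℝ} (he : 0 ≤ e) (heM : e ≤ M) (ht : 0 ≤ t)
    (hc : 0 ≤ c) (hM : M ^ 2 * (3 * M ^ 2 + 4 * t * M + t ^ 2 - 2) ≤ c) :
    e ^ 2 * (3 * e ^ 2 + 4 * t * e + t ^ 2 - 2) ≤ c := by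
  have h_factor : 3 * e ^ 2 + 4 * t * e + t ^ 2 - 2 ≤ 3 * M ^ 2 + 4 * t * M + t ^ 2 - 2 := by
    nlinarith [mul_le_mul heM heM he (he.trans heM)]
  rcases le_or_gt (3 * M ^ 2 + 4 * t * M + t ^ 2 - 2) 0 with h_nonpos | h_pos
  · nlinarith [mul_nonneg (sq_nonneg e) (neg_nonneg.mpr (h_factor.trans h_nonpos))]
  · calc e ^ 2 * (3 * e ^ 2 + 4 * t * e + t ^ 2 - 2)
        ≤ e ^ 2 * (3 * M ^ 2 + 4 * t * M + t ^ 2 - 2) :=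
          mul_le_mul_of_nonneg_left h_factor (sq_nonneg e)
      _ ≤ M ^ 2 * (3 * M ^ 2 + 4 * t * M + t ^ 2 - 2) :=
          mul_le_mul_of_nonneg_right (pow_le_pow_left₀ he heM 2) h_pos.le
      _ ≤ c := hM

lemma millsBound_quartic_le {t : ℝ} (ht : 0 ≤ t) :
    millsBound t ^ 2 * (3 * millsBound t ^ 2 + 4 * t * millsBound t + t ^ 2 - 2) ≤ 1 / 18 := by
  have hW : 0 < (1 + t ^ 2 / 2 + t ^ 4 / 8) / 2 + 399 / 1000 * (t + t ^ 3 / 3 + t ^ 5 / 15) := by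
    positivity
  rw [millsBound, div_pow, div_pow, ← sub_nonneg]
  field_simp
  -- after clearing denominators every coefficient of the polynomial in `t` is positive
  ring_nf
  positivity

theorem stmt_12 (u : ℝ) (hu : u ≤ 0) : gfun u ≤ 1 / 18 := by
  obtain ⟨t, ht, rfl⟩ : ∃ t, 0 ≤ t ∧ u = -t := ⟨-u, by linarith, by ring⟩
  have h_gfun :
      gfun (-t) = mills (-t) ^ 2 * (3 * mills (-t) ^ 2 + 4 * t * mills (-t) + t ^ 2 - 2) := by
    rw [gfun]
    ring
  rw [h_gfun]
  exact sq_mul_quartic_le_of_le (mills_nonneg _) (mills_neg_le_millsBound ht) ht (by norm_num)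
    (millsBound_quartic_le ht)
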